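/- Fix n ≥ 1, m ≥ 1, T > 0, x₀ ∈ ℝⁿ, an n×n real matrix A and an n×m real matrix B. Let r₁ : ℝⁿ → ℝ be concave and continuous, r₂ : ℝ^m → ℝ an arbitrary function, and q : ℝⁿ → ℝ concave and continuous. Suppose that for every α in the box [0,1]^m there is a function x_α : ℝ → ℝⁿ with x_α(0) = x₀ and x_α'(t) = A x_α(t) + B α for all t ∈ [0,T]. Then the reformulated payoff function Ĵ(α) := ∫₀ᵀ r₁(x_α(t)) dt + T · ( r₂(0) + Σ_{i=1}^m α_i ( r₂(e_i) − r₂(0) ) ) + q(x_α(T)) is concave on [0,1]^m (no concavity of r₂ is required). -/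

import Mathlib

/-!
The ODE `x' = A x + B α` is linear in the pair `(x, α)`, so by uniqueness of its solutions the
trajectory `α ↦ x_α(t)` commutes with convex combinations of controls in the box. Hence
`α ↦ r₁ (x_α t)` and `α ↦ q (x_α T)` are concave (concave after affine), integrating in `t`
preserves concavity, and the reformulated `r₂`-term is affine in `α`.
-/

open Set

theorem eqOn_smul_add_smul_of_linear_ODE {E : Type*} [NormedAddCommGroup E] [NormedSpace ℝ E]
    (L : E →L[ℝ] E) {x y z : ℝ → E} {w₁ w₂ : E} {a b t₀ t₁ : ℝ}
    (hx : ∀ t ∈ Icc t₀ t₁, HasDerivAt x (L (x t) + w₁) t)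
    (hy : ∀ t ∈ Icc t₀ t₁, HasDerivAt y (L (y t) + w₂) t)
    (hz : ∀ t ∈ Icc t₀ t₁, HasDerivAt z (L (z t) + (a • w₁ + b • w₂)) t)
    (h₀ : z t₀ = a • x t₀ + b • y t₀) :
    EqOn z (a • x + b • y) (Icc t₀ t₁) := by
  have hxy : ∀ t ∈ Icc t₀ t₁,
      HasDerivAt (a • x + b • y) (L ((a • x + b • y) t) + (a • w₁ + b • w₂)) t := by
    intro t ht
    convert ((hx t ht).const_smul a).add ((hy t ht).const_smul b) using 1
    simp only [Pi.add_apply, Pi.smul_apply, map_add, map_smul]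
    module
  exact ODE_solution_unique (v := fun _ u => L u + (a • w₁ + b • w₂))
    (fun _ => L.lipschitz.add (LipschitzWith.const _))
    (HasDerivAt.continuousOn hz)
    (fun t ht => (hz t (Ico_subset_Icc_self ht)).hasDerivWithinAt)
    (HasDerivAt.continuousOn hxy)
    (fun t ht => (hxy t (Ico_subset_Icc_self ht)).hasDerivWithinAt) h₀

theorem ConcaveOn.comp_of_map_smul_add_smul {E F : Type*} [AddCommGroup E] [Module ℝ E]
    [AddCommGroup F] [Module ℝ F] {s : Set E} {u : Set F} {h : F → ℝ} {φ : E → F}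
    (hh : ConcaveOn ℝ u h) (hs : Convex ℝ s) (hφs : MapsTo φ s u)
    (hφ : ∀ x ∈ s, ∀ y ∈ s, ∀ a b : ℝ, 0 ≤ a → 0 ≤ b → a + b = 1 →
      φ (a • x + b • y) = a • φ x + b • φ y) :
    ConcaveOn ℝ s (fun x => h (φ x)) := by
  refine ⟨hs, fun x hx y hy a b ha hb hab => ?_⟩
  dsimp only
  rw [hφ x hx y hy a b ha hb hab]
  exact hh.2 (hφs hx) (hφs hy) ha hb hab

theorem ConcaveOn.intervalIntegral {E : Type*} [AddCommGroup E] [Module ℝ E] {s : Set E}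
    {g : E → ℝ → ℝ} {T : ℝ} (hT : 0 ≤ T) (hg : ∀ t ∈ Icc 0 T, ConcaveOn ℝ s (g · t))
    (hint : ∀ x ∈ s, IntervalIntegrable (g x) MeasureTheory.volume 0 T) :
    ConcaveOn ℝ s (fun x => ∫ t in 0..T, g x t) := by
  refine ⟨(hg 0 ⟨le_rfl, hT⟩).1, fun x hx y hy a b ha hb hab => ?_⟩
  have hcomb := (hg 0 ⟨le_rfl, hT⟩).1 hx hy ha hb hab
  have hxa := (hint x hx).const_mul a
  have hyb := (hint y hy).const_mul b
  simp only [smul_eq_mul]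
  calc a * (∫ t in 0..T, g x t) + b * ∫ t in 0..T, g y t
      = ∫ t in 0..T, (a * g x t + b * g y t) := by
        rw [intervalIntegral.integral_add hxa hyb, intervalIntegral.integral_const_mul,
          intervalIntegral.integral_const_mul]
    _ ≤ ∫ t in 0..T, g (a • x + b • y) t :=
        intervalIntegral.integral_mono_on hT (hxa.add hyb) (hint _ hcomb)
          fun t ht => (hg t ht).2 hx hy ha hb hab

theorem stmt_17_general (n m : ℕ) (T : ℝ) (hT : 0 < T)
    (x₀ : Fin n → ℝ)
    (A : Matrix (Fin n) (Fin n) ℝ) (B : Matrix (Fin n) (Fin m) ℝ)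
    (r₁ : (Fin n → ℝ) → ℝ) (r₂ : (Fin m → ℝ) → ℝ) (q : (Fin n → ℝ) → ℝ)
    (hr₁ : ConcaveOn ℝ Set.univ r₁) (hr₁c : Continuous r₁)
    (hq : ConcaveOn ℝ Set.univ q)
    (X : (Fin m → ℝ) → ℝ → (Fin n → ℝ))
    (hX0 : ∀ α : Fin m → ℝ, (∀ i, α i ∈ Set.Icc (0 : ℝ) 1) → X α 0 = x₀)
    (hXode : ∀ α : Fin m → ℝ, (∀ i, α i ∈ Set.Icc (0 : ℝ) 1) →
      ∀ t ∈ Set.Icc (0 : ℝ) T,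
        HasDerivAt (X α) (A.mulVec (X α t) + B.mulVec α) t) :
    ConcaveOn ℝ {α : Fin m → ℝ | ∀ i, α i ∈ Set.Icc (0 : ℝ) 1}
      (fun α => (∫ t in (0 : ℝ)..T, r₁ (X α t))
        + T * (r₂ 0 + ∑ i : Fin m, α i * (r₂ (Pi.single i (1 : ℝ)) - r₂ 0))
        + q (X α T)) := by
  set S := {α : Fin m → ℝ | ∀ i, α i ∈ Set.Icc (0 : ℝ) 1}
  have hS : Convex ℝ S := fun α hα β hβ a b ha hb hab i =>
    convex_Icc 0 1 (hα i) (hβ i) ha hb hab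
  have hX : ∀ t ∈ Icc 0 T, ∀ α ∈ S, ∀ β ∈ S, ∀ a b : ℝ, 0 ≤ a → 0 ≤ b → a + b = 1 →
      X (a • α + b • β) t = a • X α t + b • X β t := by
    intro t ht α hα β hβ a b ha hb hab
    have hγ := hS hα hβ ha hb hab
    refine eqOn_smul_add_smul_of_linear_ODE A.mulVecLin.toContinuousLinearMap
      (hXode α hα) (hXode β hβ) ?_ ?_ ht
    · simpa only [Matrix.mulVec_add, Matrix.mulVec_smul, LinearMap.coe_toContinuousLinearMap',
        Matrix.mulVecLin_apply] using hXode _ hγ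
    · rw [hX0 α hα, hX0 β hβ, hX0 _ hγ, ← add_smul, hab, one_smul]
  have hint : ∀ α ∈ S, IntervalIntegrable (fun t => r₁ (X α t)) MeasureTheory.volume 0 T :=
    fun α hα => (hr₁c.comp_continuousOn (HasDerivAt.continuousOn (hXode α hα)))
      |>.intervalIntegrable_of_Icc hT.le
  have hrun := ConcaveOn.intervalIntegral hT.le (fun t ht =>
    hr₁.comp_of_map_smul_add_smul (φ := (X · t)) hS (mapsTo_univ _ _) (hX t ht)) hint
  have hterm := hq.comp_of_map_smul_add_smul (φ := (X · T)) hS (mapsTo_univ _ _)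
    (hX T ⟨hT.le, le_rfl⟩)
  have hlin : ConcaveOn ℝ S
      (fun α => T * (r₂ 0 + ∑ i : Fin m, α i * (r₂ (Pi.single i (1 : ℝ)) - r₂ 0))) :=
    -- the sum is `Fintype.linearCombination ℝ (fun i => r₂ (Pi.single i 1) - r₂ 0) α` by `rfl`
    ((concaveOn_const _ hS).add ((Fintype.linearCombination ℝ _).concaveOn hS)).smul hT.le
  exact (hrun.add hlin).add hterm

/-- Concavity of the reformulated payoff of a linear combinatorial
dynamical system: with `r₁`, `q` concave and continuous, `r₂` arbitrary, and `X α`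
solving `x' = A x + B α`, `x(0) = x₀` for each `α` in the box `[0,1]^m`, the
reformulated payoff
`Ĵ(α) = ∫₀ᵀ r₁(X α t) dt + T·(r₂ 0 + Σ_i α_i (r₂ e_i − r₂ 0)) + q(X α T)` is
concave on the box (no concavity of `r₂` required). -/
theorem stmt_17 (n m : ℕ) (hn : 1 ≤ n) (hm : 1 ≤ m) (T : ℝ) (hT : 0 < T)
    (x₀ : Fin n → ℝ)
    (A : Matrix (Fin n) (Fin n) ℝ) (B : Matrix (Fin n) (Fin m) ℝ)
    (r₁ : (Fin n → ℝ) → ℝ) (r₂ : (Fin m → ℝ) → ℝ) (q : (Fin n → ℝ) → ℝ)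
    (hr₁ : ConcaveOn ℝ Set.univ r₁) (hr₁c : Continuous r₁)
    (hq : ConcaveOn ℝ Set.univ q) (hqc : Continuous q)
    (X : (Fin m → ℝ) → ℝ → (Fin n → ℝ))
    (hX0 : ∀ α : Fin m → ℝ, (∀ i, α i ∈ Set.Icc (0 : ℝ) 1) → X α 0 = x₀)
    (hXode : ∀ α : Fin m → ℝ, (∀ i, α i ∈ Set.Icc (0 : ℝ) 1) →
      ∀ t ∈ Set.Icc (0 : ℝ) T,
        HasDerivAt (X α) (A.mulVec (X α t) + B.mulVec α) t) :
    ConcaveOn ℝ {α : Fin m → ℝ | ∀ i, α i ∈ Set.Icc (0 : ℝ) 1}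
      (fun α => (∫ t in (0 : ℝ)..T, r₁ (X α t))
        + T * (r₂ 0 + ∑ i : Fin m, α i * (r₂ (Pi.single i (1 : ℝ)) - r₂ 0))
        + q (X α T)) :=
  stmt_17_general n m T hT x₀ A B r₁ r₂ q hr₁ hr₁c hq X hX0 hXode
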